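/- arXiv:2401.10088 — 3 statements merged into one kernel-verified Lean document; each statement's English description precedes it below -/
import Mathlib

section
/- Let p ≥ 2 be an integer, let ω_1, …, ω_p be pairwise distinct positive real numbers, and define β_j := (1/ω_j)^{p-1} / ∏_{l≠j} (1/ω_j − 1/ω_l) and T_p(z) := ∑_{j=1}^p β_j (1 − ω_j z)^{-1} for complex z with ω_j z ≠ 1 for all j. Then T_p(z) − 1 = O(z^p) as z → 0; precisely, there exist constants C > 0 and δ > 0 such that |T_p(z) − 1| ≤ C |z|^p for all complex z with |z| < δ. -/
/-!
Put `x j = 1 / ω j`. Then `β j = x j ^ (p - 1) * w j` with the barycentric weights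
`w j = ∏_{l ≠ j} (x j - x l)⁻¹`, and each summand of `T_p(z)` equals `-w j x j ^ p / (z - x j)`.
Interpolating `X ^ p - ∏ j, (X - x j)`, of degree `< p`, at the nodes `x j` gives the partial
fraction identity `∑ j, w j x j ^ p / (z - x j) = z ^ p / ∏ j, (z - x j) - 1`, hence
`T_p(z) - 1 = -z ^ p / ∏ j, (z - x j)`, and the last factor is continuous at `0` since no node vanishes.
-/

open Finset Polynomial Filter Topology

namespace Lagrange

variable {F ι : Type*} [Field F] {s : Finset ι} {v : ι → F} {x : F}

theorem degree_X_pow_card_sub_nodal_lt : ((X : F[X]) ^ #s - nodal s v).degree < #s := by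
  have hdeg : ((X : F[X]) ^ #s).degree = #s := degree_X_pow _
  simpa only [hdeg] using degree_sub_lt_left (hdeg.trans degree_nodal.symm)
    (pow_ne_zero _ X_ne_zero) (by rw [leadingCoeff_X_pow, nodal_monic.leadingCoeff])

theorem sum_nodalWeight_mul_inv_sub_mul_pow_card [DecidableEq ι] (hvs : Set.InjOn v s)
    (hx : ∀ i ∈ s, x ≠ v i) :
    ∑ i ∈ s, nodalWeight s v i * (x - v i)⁻¹ * v i ^ #s = x ^ #s / eval x (nodal s v) - 1 := by
  have hinterp : X ^ #s - nodal s v = interpolate s v (fun i => v i ^ #s) :=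
    eq_interpolate_of_eval_eq _ hvs degree_X_pow_card_sub_nodal_lt fun i hi => by
      simp [eval_nodal_at_node hi]
  have heval := congrArg (eval x) hinterp
  rw [eval_interpolate_not_at_node _ hx, eval_sub, eval_pow, eval_X] at heval
  rw [eq_sub_iff_add_eq, eq_div_iff (eval_nodal_not_at_node hx)]
  linear_combination heval.symm

end Lagrange

/-- Also true at `z = a`, where both sides are `0` by the convention `0⁻¹ = 0`. -/
theorem pow_pred_mul_inv_one_sub_inv_mul {K : Type*} [Field K] {a : K} (ha : a ≠ 0) {n : ℕ}
    (hn : n ≠ 0) (z : K) : a ^ (n - 1) * (1 - a⁻¹ * z)⁻¹ = -((z - a)⁻¹ * a ^ n) := by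
  obtain ⟨m, rfl⟩ := Nat.exists_eq_succ_of_ne_zero hn
  have hsub : 1 - a⁻¹ * z = -(a⁻¹ * (z - a)) := by
    rw [mul_sub, inv_mul_cancel₀ ha]
    ring
  rw [hsub, inv_neg, mul_inv, inv_inv, Nat.succ_sub_one, pow_succ]
  ring

theorem exists_pos_forall_norm_le_mul_norm_pow {𝕜 E : Type*} [NormedField 𝕜]
    [SeminormedAddCommGroup E] [NormedSpace 𝕜 E] {f g : 𝕜 → E} {n : ℕ}
    (hg : ContinuousAt g 0) (hfg : f =ᶠ[𝓝 0] fun z => z ^ n • g z) :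
    ∃ C > (0 : ℝ), ∃ δ > (0 : ℝ), ∀ z : 𝕜, ‖z‖ < δ → ‖f z‖ ≤ C * ‖z‖ ^ n := by
  have hbound : ∀ᶠ z in 𝓝 0, ‖g z‖ < ‖g 0‖ + 1 := hg.norm.eventually_lt_const (lt_add_one _)
  obtain ⟨δ, hδ, hδfg⟩ := Metric.eventually_nhds_iff.1 (hfg.and hbound)
  refine ⟨‖g 0‖ + 1, by positivity, δ, hδ, fun z hz => ?_⟩
  obtain ⟨hfz, hgz⟩ := hδfg (by simpa using hz)
  rw [hfz, norm_smul, norm_pow, mul_comm]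
  gcongr

theorem tase_operator_order_general (p : ℕ)
    (ω : Fin p → ℝ) (hpos : ∀ j, 0 < ω j) (hinj : Function.Injective ω)
    (β : Fin p → ℝ)
    (hβ : ∀ j, β j = (1 / ω j) ^ (p - 1) /
      ∏ l ∈ Finset.univ.erase j, (1 / ω j - 1 / ω l)) :
    ∃ C > (0 : ℝ), ∃ δ > (0 : ℝ), ∀ z : ℂ, ‖z‖ < δ →
      ‖(∑ j, (β j : ℂ) * (1 - (ω j : ℂ) * z)⁻¹) - 1‖ ≤
        C * ‖z‖ ^ p := by
  set x : Fin p → ℂ := fun j => ((ω j : ℂ))⁻¹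
  have hx0 : ∀ j, x j ≠ 0 := fun j => by simp [x, (hpos j).ne']
  have hxinj : Function.Injective x := fun i j h => hinj (by simpa [x] using h)
  have hsummand : ∀ j (z : ℂ), (β j : ℂ) * (1 - ω j * z)⁻¹ =
      -(Lagrange.nodalWeight univ x j * (z - x j)⁻¹ * x j ^ p) := fun j z => by
    have hβx : (β j : ℂ) = x j ^ (p - 1) * Lagrange.nodalWeight univ x j := by
      rw [hβ j, Lagrange.nodalWeight, prod_inv_distrib]
      push_cast
      simp [x, div_eq_mul_inv]
    have hω : (ω j : ℂ) = (x j)⁻¹ := by simp [x]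
    rw [hβx, hω, mul_right_comm, pow_pred_mul_inv_one_sub_inv_mul (hx0 j) j.pos.ne']
    ring
  have hnodes : ∀ᶠ z in 𝓝 0, ∀ j ∈ univ, z ≠ x j :=
    eventually_all_finset _ |>.2 fun j _ => eventually_ne_nhds (hx0 j).symm
  refine exists_pos_forall_norm_le_mul_norm_pow ((Lagrange.nodal univ x).continuousAt.inv₀
    (Lagrange.eval_nodal_not_at_node fun j _ => (hx0 j).symm)).neg (hnodes.mono fun z hz => ?_)
  have hpf := Lagrange.sum_nodalWeight_mul_inv_sub_mul_pow_card hxinj.injOn hz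
  rw [card_univ, Fintype.card_fin] at hpf
  dsimp only
  rw [sum_congr rfl fun j _ => hsummand j z, sum_neg_distrib, hpf, smul_eq_mul]
  simp only [Pi.neg_apply, Pi.inv_apply]
  ring

/-- With `β_j` as in the TASE operator
`T_p(z) := ∑_j β_j (1 − ω_j z)⁻¹`, one has `T_p(z) − 1 = O(z^p)` as `z → 0`:
there exist `C > 0` and `δ > 0` with `|T_p(z) − 1| ≤ C |z|^p` for `|z| < δ`. -/
theorem tase_operator_order (p : ℕ) (hp : 2 ≤ p)
    (ω : Fin p → ℝ) (hpos : ∀ j, 0 < ω j) (hinj : Function.Injective ω)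
    (β : Fin p → ℝ)
    (hβ : ∀ j, β j = (1 / ω j) ^ (p - 1) /
      ∏ l ∈ Finset.univ.erase j, (1 / ω j - 1 / ω l)) :
    ∃ C > (0 : ℝ), ∃ δ > (0 : ℝ), ∀ z : ℂ, ‖z‖ < δ →
      ‖(∑ j, (β j : ℂ) * (1 - (ω j : ℂ) * z)⁻¹) - 1‖ ≤
        C * ‖z‖ ^ p :=
  tase_operator_order_general p ω hpos hinj β hβ
end

section
/- Let T̂_2(y) := y·(−(1 − 3y)^{-1} + 2(1 − (3/2)y)^{-1}) for y < 0. Then T̂_2 is strictly increasing on (−∞, 0) and satisfies −1 < T̂_2(y) < 0 for every y < 0. -/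
/-!
Writing `D(y) = (1 - 3y)(1 - 3y/2)`, one has `T̂₂(y) = y(1 - 9y/2) / D(y)` and
`T̂₂(y) + 1 = (1 - 7y/2) / D(y)`, which give both bounds at once. For monotonicity, each term
`y / (1 - ωy)` has the difference quotient `1 / ((1 - ωx)(1 - ωy))`, so the difference quotient of
`T̂₂` is `2 / ((1 - 3x/2)(1 - 3y/2)) - 1 / ((1 - 3x)(1 - 3y))`, positive for `x, y < 0`.
-/

noncomputable def tase2Hat (y : ℝ) : ℝ := y * (-(1 - 3 * y)⁻¹ + 2 * (1 - (3 / 2) * y)⁻¹)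

lemma mul_inv_one_sub_mul_sub {ω x y : ℝ} (hx : 1 - ω * x ≠ 0) (hy : 1 - ω * y ≠ 0) :
    y * (1 - ω * y)⁻¹ - x * (1 - ω * x)⁻¹ = (y - x) * ((1 - ω * x) * (1 - ω * y))⁻¹ := by
  simp only [← div_eq_mul_inv]
  rw [div_sub_div _ _ hy hx]
  ring

lemma tase2Hat_sub {x y : ℝ} (hx₁ : 1 - 3 * x ≠ 0) (hx₂ : 1 - (3 / 2) * x ≠ 0)
    (hy₁ : 1 - 3 * y ≠ 0) (hy₂ : 1 - (3 / 2) * y ≠ 0) :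
    tase2Hat y - tase2Hat x = (y - x) *
      (2 * ((1 - (3 / 2) * x) * (1 - (3 / 2) * y))⁻¹ - ((1 - 3 * x) * (1 - 3 * y))⁻¹) := by
  have h₁ := mul_inv_one_sub_mul_sub hx₁ hy₁
  have h₂ := mul_inv_one_sub_mul_sub hx₂ hy₂
  unfold tase2Hat
  linear_combination 2 * h₂ - h₁

lemma tase2Hat_eq_div {y : ℝ} (h₁ : 1 - 3 * y ≠ 0) (h₂ : 1 - (3 / 2) * y ≠ 0) :
    tase2Hat y = y * (1 - (9 / 2) * y) / ((1 - 3 * y) * (1 - (3 / 2) * y)) := by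
  rw [tase2Hat, show y * (-(1 - 3 * y)⁻¹ + 2 * (1 - (3 / 2) * y)⁻¹) =
    2 * y / (1 - (3 / 2) * y) - y / (1 - 3 * y) by ring, div_sub_div _ _ h₂ h₁]
  ring

lemma tase2Hat_add_one_eq_div {y : ℝ} (h₁ : 1 - 3 * y ≠ 0) (h₂ : 1 - (3 / 2) * y ≠ 0) :
    tase2Hat y + 1 = (1 - (7 / 2) * y) / ((1 - 3 * y) * (1 - (3 / 2) * y)) := by
  rw [tase2Hat_eq_div h₁ h₂, div_add_one (mul_ne_zero h₁ h₂)]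
  ring

lemma tase2Hat_neg {y : ℝ} (hy : y < 0) : tase2Hat y < 0 := by
  rw [tase2Hat_eq_div (by linarith) (by linarith)]
  exact div_neg_of_neg_of_pos (mul_neg_of_neg_of_pos hy (by linarith))
    (mul_pos (by linarith) (by linarith))

lemma neg_one_lt_tase2Hat {y : ℝ} (hy : y < 2 / 7) : -1 < tase2Hat y := by
  have h : 0 < tase2Hat y + 1 := by
    rw [tase2Hat_add_one_eq_div (by linarith) (by linarith)]
    exact div_pos (by linarith) (mul_pos (by linarith) (by linarith))
  linarith

lemma tase2Hat_strictMonoOn : StrictMonoOn tase2Hat (Set.Iio 0) := by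
  intro x (hx : x < 0) y (hy : y < 0) hxy
  have hD₁ : 0 < (1 - 3 * x) * (1 - 3 * y) := mul_pos (by linarith) (by linarith)
  have hD₂ : 0 < (1 - (3 / 2) * x) * (1 - (3 / 2) * y) := mul_pos (by linarith) (by linarith)
  have hD : (1 - (3 / 2) * x) * (1 - (3 / 2) * y) < 2 * ((1 - 3 * x) * (1 - 3 * y)) := by
    nlinarith [mul_pos_of_neg_of_neg hx hy]
  have hinv : ((1 - 3 * x) * (1 - 3 * y))⁻¹ < 2 * ((1 - (3 / 2) * x) * (1 - (3 / 2) * y))⁻¹ := by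
    rw [← div_eq_mul_inv, lt_div_iff₀ hD₂, ← div_eq_inv_mul, div_lt_iff₀ hD₁]
    linarith
  rw [← sub_pos, tase2Hat_sub (by linarith) (by linarith) (by linarith) (by linarith)]
  exact mul_pos (sub_pos.2 hxy) (sub_pos.2 hinv)

/-- `T̂₂(y) := y·(−(1 − 3y)⁻¹ + 2(1 − (3/2)y)⁻¹)` is strictly increasing on
`(−∞, 0)` and satisfies `−1 < T̂₂(y) < 0` for every `y < 0`. -/
theorem That2_strictMono_and_bounds :
    StrictMonoOn (fun y : ℝ => y * (-(1 - 3 * y)⁻¹ + 2 * (1 - (3 / 2) * y)⁻¹)) (Set.Iio 0) ∧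
    ∀ y : ℝ, y < 0 →
      -1 < y * (-(1 - 3 * y)⁻¹ + 2 * (1 - (3 / 2) * y)⁻¹) ∧
      y * (-(1 - 3 * y)⁻¹ + 2 * (1 - (3 / 2) * y)⁻¹) < 0 :=
  ⟨tase2Hat_strictMonoOn, fun _ hy => ⟨neg_one_lt_tase2Hat (by linarith), tase2Hat_neg hy⟩⟩
end

section
/- Fix p ∈ {2, 3, 4} and pairwise distinct positive parameters ω_1, …, ω_p with β_j := (1/ω_j)^{p-1} / ∏_{l≠j} (1/ω_j − 1/ω_l). Let A be a real symmetric negative definite d×d matrix and B a real d×d matrix, and for k > 0 let M(k) := ∑_{q=0}^p Z(k)^q/q! with Z(k) := k T_p(kA)(A + B), T_p(kA) := ∑_j β_j (I − ω_j k A)^{-1}. If the spectral radius of M(k) is at most 1 for every k > 0, then every eigenvalue μ of A^{-1}B satisfies |R_p(T̂_p^*(1+μ))| ≤ 1, where R_p(z) := ∑_{q=0}^p z^q/q! and T̂_p^* := −∑_{j=1}^p β_j/ω_j. -/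
open Finset

/-- The TASE coefficients `β_j := (1/ω_j)^(p-1) / ∏_{l≠j} (1/ω_j − 1/ω_l)`. -/
noncomputable def taseBeta (p : ℕ) (ω : Fin p → ℝ) (j : Fin p) : ℝ :=
  (1 / ω j) ^ (p - 1) / ∏ l ∈ Finset.univ.erase j, (1 / ω j - 1 / ω l)

/-- `T̂_p(y) := y ∑_j β_j (1 − ω_j y)⁻¹`. -/
noncomputable def taseThat (p : ℕ) (ω : Fin p → ℝ) (y : ℝ) : ℝ :=
  y * ∑ j, taseBeta p ω j * (1 - ω j * y)⁻¹

/-- The truncated exponential `R_p(z) := ∑_{q=0}^p z^q/q!`, the stability function of an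
explicit `p`-stage order-`p` Runge-Kutta method. -/
noncomputable def rkStabFun (p : ℕ) (z : ℂ) : ℂ :=
  ∑ q ∈ Finset.range (p + 1), z ^ q / (q.factorial : ℂ)

/-- The stability region `𝓡_p := {z ∈ ℂ : Re z ≤ 0, |R_p(z)| ≤ 1}`. -/
noncomputable def rkStabRegion (p : ℕ) : Set ℂ :=
  {z : ℂ | z.re ≤ 0 ∧ ‖rkStabFun p z‖ ≤ 1}

/-- The conditional stability diagram
`D_{y,p} := {μ ∈ ℂ : Re μ ≥ −1, |R_p(T̂_p(y)(1+μ))| ≤ 1}`. -/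
noncomputable def taseDiagram (p : ℕ) (ω : Fin p → ℝ) (y : ℝ) : Set ℂ :=
  {μ : ℂ | -1 ≤ μ.re ∧ ‖rkStabFun p ((taseThat p ω y : ℝ) * (1 + μ))‖ ≤ 1}

/-- The Table-1 parameters of the paper: `ω = (3, 3/2)` for `p = 2`,
`ω = (2.3147, 1.8796, 1.5822)` for `p = 3`, `ω = (3.9396, 2.4506, 2.2271, 2.0612)` for `p = 4`. -/
noncomputable def tableOmega (p : ℕ) (j : Fin p) : ℝ :=
  if p = 2 then (if (j : ℕ) = 0 then 3 else 3 / 2)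
  else if p = 3 then
    (if (j : ℕ) = 0 then 2.3147 else if (j : ℕ) = 1 then 1.8796 else 1.5822)
  else
    (if (j : ℕ) = 0 then 3.9396 else if (j : ℕ) = 1 then 2.4506
     else if (j : ℕ) = 2 then 2.2271 else 2.0612)

/-- `T̂_p^* := −∑_j β_j/ω_j`, the limit of `T̂_p(y)` as `y → −∞`. -/
noncomputable def taseThatStar (p : ℕ) (ω : Fin p → ℝ) : ℝ :=
  -∑ j, taseBeta p ω j / ω j

/-- The unconditional stability diagram
`D_{∞,p} := {μ ∈ ℂ : Re μ ≥ −1, |R_p(T̂_p^*(1+μ))| ≤ 1}`. -/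
noncomputable def taseDiagramInf (p : ℕ) (ω : Fin p → ℝ) : Set ℂ :=
  {μ : ℂ | -1 ≤ μ.re ∧ ‖rkStabFun p ((taseThatStar p ω : ℝ) * (1 + μ))‖ ≤ 1}

/-- The TASE operator applied to `kA`: `T_p(kA) := ∑_j β_j (I − ω_j k A)⁻¹`. -/
noncomputable def taseMat (p d : ℕ) (ω : Fin p → ℝ) (k : ℝ)
    (A : Matrix (Fin d) (Fin d) ℂ) : Matrix (Fin d) (Fin d) ℂ :=
  ∑ j, (taseBeta p ω j : ℂ) • (1 - ((ω j * k : ℝ) : ℂ) • A)⁻¹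

/-- `Z := k T_p(kA)(A + B)`. -/
noncomputable def taseZ (p d : ℕ) (ω : Fin p → ℝ) (k : ℝ)
    (A B : Matrix (Fin d) (Fin d) ℂ) : Matrix (Fin d) (Fin d) ℂ :=
  (k : ℂ) • (taseMat p d ω k A * (A + B))

/-- The TASE-RK stability matrix `M := ∑_{q=0}^p Z^q/q!`. -/
noncomputable def taseM (p d : ℕ) (ω : Fin p → ℝ) (k : ℝ)
    (A B : Matrix (Fin d) (Fin d) ℂ) : Matrix (Fin d) (Fin d) ℂ :=
  ∑ q ∈ Finset.range (p + 1), ((q.factorial : ℂ))⁻¹ • (taseZ p d ω k A B) ^ q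

/-! As `k → ∞`, `k (I − ω_j k A)⁻¹ = (k⁻¹ I − ω_j A)⁻¹ → −(ω_j A)⁻¹`, so `k T_p(kA) → T̂_p^* A⁻¹`
and `M(k)` converges to `R_p(T̂_p^* (I + A⁻¹B))`. The spectral radius of complex matrices is upper
semicontinuous, because factoring the characteristic polynomial gives
`|det(zI − M)| ≥ (|z| − ρ(M))^d`; hence the limit still has spectral radius at most `1`. By spectral
mapping it has `R_p(T̂_p^*(1 + μ))` as an eigenvalue for every eigenvalue `μ` of `A⁻¹B`. -/

open Filter Topology Polynomial
open scoped NNReal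

namespace Matrix
variable {n : Type*} [Fintype n] [DecidableEq n]

theorem inv_smul₀ {K : Type*} [Field K] (k : K) (X : Matrix n n K) :
    (k • X)⁻¹ = k⁻¹ • X⁻¹ := by
  rcases eq_or_ne k 0 with rfl | hk
  · simp
  by_cases hX : IsUnit X.det
  · exact inv_smul' X (Units.mk0 k hk) hX
  · have hkX : ¬IsUnit (k • X).det := by
      rw [det_smul]; exact fun h => hX (isUnit_of_mul_isUnit_right h)
    rw [nonsing_inv_apply_not_isUnit _ hX, nonsing_inv_apply_not_isUnit _ hkX, smul_zero]

theorem tendsto_smul_inv_one_sub_smul {A : Matrix n n ℂ} (hA : IsUnit A.det) {c : ℝ}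
    (hc : c ≠ 0) :
    Tendsto (fun k : ℝ => (k : ℂ) • (1 - ((c * k : ℝ) : ℂ) • A)⁻¹) atTop
      (𝓝 ((-(c : ℂ))⁻¹ • A⁻¹)) := by
  set g : ℝ → Matrix n n ℂ := fun s => ((s : ℂ) • 1 - (c : ℂ) • A)⁻¹
  have hg0 : g 0 = (-(c : ℂ))⁻¹ • A⁻¹ := by
    simp only [g, Complex.ofReal_zero, zero_smul, zero_sub, ← neg_smul, inv_smul₀]
  have hdet : (((0 : ℝ) : ℂ) • (1 : Matrix n n ℂ) - (c : ℂ) • A).det ≠ 0 := by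
    rw [Complex.ofReal_zero, zero_smul, zero_sub, det_neg, det_smul]
    simp [hc, hA.ne_zero]
  have hg : ContinuousAt g 0 :=
    (continuousAt_matrix_inv _ (NormedRing.inverse_continuousAt (Units.mk0 _ hdet))).comp
      (f := fun s : ℝ => (s : ℂ) • (1 : Matrix n n ℂ) - (c : ℂ) • A) (by fun_prop)
  rw [← hg0]
  refine (hg.tendsto.comp tendsto_inv_atTop_zero).congr' ?_
  filter_upwards [eventually_ne_atTop 0] with k hk
  have hkC : (k : ℂ) ≠ 0 := by exact_mod_cast hk
  have : 1 - ((c * k : ℝ) : ℂ) • A = (k : ℂ) • ((((k⁻¹ : ℝ)) : ℂ) • 1 - (c : ℂ) • A) := by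
    rw [smul_sub, smul_smul, smul_smul, Complex.ofReal_inv, mul_inv_cancel₀ hkC, one_smul,
      Complex.ofReal_mul, mul_comm]
  simp only [Function.comp_apply, g, this, inv_smul₀, smul_smul,
    mul_inv_cancel₀ hkC, one_smul]

theorem pow_card_le_nnnorm_det_scalar_sub {M : Matrix n n ℂ} {r : ℝ≥0}
    (hM : spectralRadius ℂ M ≤ r) (z : ℂ) :
    (‖z‖₊ - r) ^ Fintype.card n ≤ ‖(scalar n z - M).det‖₊ := by
  have hsplit : M.charpoly.Splits := IsAlgClosed.splits _
  rw [← eval_charpoly, hsplit.eval_eq_prod_roots_of_monic M.charpoly_monic,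
    ← M.charpoly_natDegree_eq_dim, hsplit.natDegree_eq_card_roots,
    ← Multiset.card_map (fun w => ‖z - w‖₊),
    show ‖(M.charpoly.roots.map (z - ·)).prod‖₊ = (M.charpoly.roots.map (‖z - ·‖₊)).prod from
      (map_multiset_prod (nnnormHom (α := ℂ)) _).trans (by rw [Multiset.map_map]; rfl)]
  refine Multiset.pow_card_le_prod fun x hx => ?_
  obtain ⟨w, hw, rfl⟩ := Multiset.mem_map.mp hx
  have hwr : ‖w‖₊ ≤ r := ENNReal.coe_le_coe.mp <| (le_iSup₂ (α := ENNReal) w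
    (mem_spectrum_iff_isRoot_charpoly.mpr (isRoot_of_mem_roots hw))).trans hM
  rw [tsub_le_iff_right]
  exact (nnnorm_le_nnnorm_add_nnnorm_sub' z w).trans (by rw [add_comm]; gcongr)

theorem spectralRadius_le_of_tendsto {ι : Type*} {l : Filter ι} [l.NeBot]
    {M : ι → Matrix n n ℂ} {M₀ : Matrix n n ℂ} (hM : Tendsto M l (𝓝 M₀)) {r : ℝ≥0}
    (hr : ∀ᶠ i in l, spectralRadius ℂ (M i) ≤ r) : spectralRadius ℂ M₀ ≤ r := by
  refine iSup₂_le fun z hz => ENNReal.coe_le_coe.mpr ?_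
  by_contra! hrz
  have hdet : Tendsto (fun i => ‖(scalar n z - M i).det‖₊) l (𝓝 0) := by
    have h0 : (scalar n z - M₀).det = 0 := by
      rw [← eval_charpoly]; exact mem_spectrum_iff_isRoot_charpoly.mp hz
    rw [← nnnorm_zero (E := ℂ), ← h0]
    exact ((continuous_const.sub continuous_id).matrix_det.nnnorm.tendsto M₀).comp hM
  have hpos : 0 < (‖z‖₊ - r) ^ Fintype.card n := pow_pos (tsub_pos_of_lt hrz) _
  exact hpos.not_ge <|
    ge_of_tendsto hdet (hr.mono fun i hi => pow_card_le_nnnorm_det_scalar_sub hi z)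

end Matrix

noncomputable def rkStabPoly (p : ℕ) : ℂ[X] :=
  ∑ q ∈ Finset.range (p + 1), C ((q.factorial : ℂ)⁻¹) * X ^ q

theorem eval_rkStabPoly (p : ℕ) (z : ℂ) : (rkStabPoly p).eval z = rkStabFun p z := by
  simp [rkStabPoly, rkStabFun, eval_finsetSum, div_eq_inv_mul]

theorem aeval_rkStabPoly {R : Type*} [Ring R] [Algebra ℂ R] (p : ℕ) (a : R) :
    aeval a (rkStabPoly p) = ∑ q ∈ Finset.range (p + 1), (q.factorial : ℂ)⁻¹ • a ^ q := by
  simp [rkStabPoly, Algebra.smul_def]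

theorem rkStabFun_mem_spectrum_aeval {R : Type*} [Ring R] [Algebra ℂ R] (p : ℕ) {a : R} {μ : ℂ}
    (hμ : μ ∈ spectrum ℂ a) (t : ℂ) :
    rkStabFun p (t * (1 + μ)) ∈ spectrum ℂ (aeval (t • (1 + a)) (rkStabPoly p)) := by
  have h := spectrum.subset_polynomial_aeval a ((rkStabPoly p).comp (C t * (1 + X))) ⟨μ, hμ, rfl⟩
  simpa [eval_comp, aeval_comp, eval_rkStabPoly, Algebra.smul_def] using h

section Tase
variable {p d : ℕ} {ω : Fin p → ℝ} {A : Matrix (Fin d) (Fin d) ℂ}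

theorem tendsto_smul_taseMat (hω : ∀ j, ω j ≠ 0) (hA : IsUnit A.det) :
    Tendsto (fun k : ℝ => (k : ℂ) • taseMat p d ω k A) atTop
      (𝓝 ((taseThatStar p ω : ℂ) • A⁻¹)) := by
  have hlim : (taseThatStar p ω : ℂ) • A⁻¹ =
      ∑ j, (taseBeta p ω j : ℂ) • ((-(ω j : ℂ))⁻¹ • A⁻¹) := by
    simp only [smul_smul, ← Finset.sum_smul, taseThatStar]
    push_cast
    simp [div_eq_mul_inv, Finset.sum_neg_distrib]
  simp only [taseMat, Finset.smul_sum, smul_comm (_ : ℂ) (taseBeta p ω _ : ℂ)]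
  rw [hlim]
  exact tendsto_finsetSum _ fun j _ =>
    (Matrix.tendsto_smul_inv_one_sub_smul hA (hω j)).const_smul _

theorem tendsto_taseZ (hω : ∀ j, ω j ≠ 0) (hA : IsUnit A.det) (B : Matrix (Fin d) (Fin d) ℂ) :
    Tendsto (fun k : ℝ => taseZ p d ω k A B) atTop
      (𝓝 ((taseThatStar p ω : ℂ) • (1 + A⁻¹ * B))) := by
  have hlim : (taseThatStar p ω : ℂ) • (1 + A⁻¹ * B) =
      ((taseThatStar p ω : ℂ) • A⁻¹) * (A + B) := by
    rw [smul_mul_assoc, mul_add, Matrix.nonsing_inv_mul A hA]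
  simp only [taseZ, ← smul_mul_assoc]
  rw [hlim]
  exact (tendsto_smul_taseMat hω hA).mul_const _

theorem tendsto_taseM (hω : ∀ j, ω j ≠ 0) (hA : IsUnit A.det) (B : Matrix (Fin d) (Fin d) ℂ) :
    Tendsto (fun k : ℝ => taseM p d ω k A B) atTop
      (𝓝 (aeval ((taseThatStar p ω : ℂ) • (1 + A⁻¹ * B)) (rkStabPoly p))) := by
  simp only [taseM, ← aeval_rkStabPoly]
  exact ((rkStabPoly p).continuous_aeval.tendsto _).comp (tendsto_taseZ hω hA B)

end Tase

theorem genEig_cond_of_unconditionallyStable_general (p : ℕ)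
    (ω : Fin p → ℝ) (hpos : ∀ j, 0 < ω j)
    (d : ℕ) (A B : Matrix (Fin d) (Fin d) ℝ)
    (hAneg : (-A).PosDef)
    (hstab : ∀ k : ℝ, 0 < k →
      spectralRadius ℂ (taseM p d ω k (A.map Complex.ofReal) (B.map Complex.ofReal)) ≤ 1) :
    ∀ μ ∈ spectrum ℂ ((A.map Complex.ofReal)⁻¹ * B.map Complex.ofReal),
      ‖rkStabFun p (((taseThatStar p ω : ℝ) : ℂ) * (1 + μ))‖ ≤ 1 := by
  intro μ hμ
  have hA : IsUnit (A.map Complex.ofReal).det :=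
    (Matrix.isUnit_iff_isUnit_det _).mp
      ((neg_neg A ▸ hAneg.isUnit.neg).map Complex.ofRealHom.mapMatrix)
  have hρ := Matrix.spectralRadius_le_of_tendsto (r := 1)
    (tendsto_taseM (fun j => (hpos j).ne') hA (B.map Complex.ofReal))
    ((eventually_gt_atTop 0).mono hstab)
  exact_mod_cast (le_iSup₂ (α := ENNReal) _ (rkStabFun_mem_spectrum_aeval p hμ _)).trans hρ

/-- Necessary condition for unconditional stability: if `ρ(M(k)) ≤ 1` for every
step `k > 0`, then every eigenvalue `μ` of `A⁻¹B` satisfies `|R_p(T̂_p^*(1+μ))| ≤ 1`. -/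
theorem genEig_cond_of_unconditionallyStable (p : ℕ) (hp : p = 2 ∨ p = 3 ∨ p = 4)
    (ω : Fin p → ℝ) (hpos : ∀ j, 0 < ω j) (hinj : Function.Injective ω)
    (d : ℕ) (A B : Matrix (Fin d) (Fin d) ℝ)
    (hA : A.IsSymm) (hAneg : (-A).PosDef)
    (hstab : ∀ k : ℝ, 0 < k →
      spectralRadius ℂ (taseM p d ω k (A.map Complex.ofReal) (B.map Complex.ofReal)) ≤ 1) :
    ∀ μ ∈ spectrum ℂ ((A.map Complex.ofReal)⁻¹ * B.map Complex.ofReal),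
      ‖rkStabFun p (((taseThatStar p ω : ℝ) : ℂ) * (1 + μ))‖ ≤ 1 :=
  genEig_cond_of_unconditionallyStable_general p ω hpos d A B hAneg hstab
end
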